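/- arXiv:1512.08757 — 2 statements merged into one kernel-verified Lean document; each statement's English description precedes it below -/
import Mathlib

section
/- Let G = (V,E) be a finite simple graph with n = |V|, let W ⊆ V be a maximal clique of G, and let c ∈ ℝ^V, d ∈ ℝ be such that cᵀx ≤ d is valid for F_W = {x ∈ STAB(G) : x_W = 1} with support H = {v ∈ V : c_v ≠ 0}, and assume there exist n−1 affinely independent points in {x ∈ F_W : cᵀx = d} (i.e., cᵀx ≤ d is facet-defining for F_W). Set λ = d − α(G[H \ W], c) and f(x) = (cᵀx − d) − λ(x_W − 1). Then there exist n affinely independent points in {x ∈ STAB(G) : f(x) = 0}; in particular f(x) ≤ 0 is facet-defining for STAB(G). -/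
open Finset

variable {V : Type*}

/-- A stable (independent) set of a graph: pairwise non-adjacent vertices. -/
def IsStable (G : SimpleGraph V) (S : Finset V) : Prop :=
  ∀ u ∈ S, ∀ v ∈ S, ¬ G.Adj u v

/-- The characteristic vectors of stable sets of `G`. -/
def stableVecs [DecidableEq V] (G : SimpleGraph V) : Set (V → ℝ) :=
  {x | ∃ S : Finset V, IsStable G S ∧ x = fun v => if v ∈ S then (1 : ℝ) else 0}

/-- The stable set polytope `STAB(G)`. -/
def STAB [DecidableEq V] (G : SimpleGraph V) : Set (V → ℝ) :=
  convexHull ℝ (stableVecs G)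

/-- `x_W = ∑_{v ∈ W} x_v`. -/
def vsum (W : Finset V) (x : V → ℝ) : ℝ := ∑ v ∈ W, x v

/-- The clique projection `G|W`: add every non-edge `uv` with `W ⊆ N(u) ∪ N(v)`. -/
def cliqueProj (G : SimpleGraph V) (W : Finset V) : SimpleGraph V where
  Adj u v := G.Adj u v ∨ (u ≠ v ∧ ¬G.Adj u v ∧ ∀ w ∈ W, G.Adj w u ∨ G.Adj w v)
  symm := by
    constructor
    rintro u v (h | ⟨hne, hna, h⟩)
    · exact Or.inl h.symm
    · exact Or.inr ⟨hne.symm, fun h' => hna h'.symm, fun w hw => (h w hw).symm⟩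
  loopless := by
    constructor
    rintro u (h | ⟨hne, _, _⟩)
    · exact G.loopless.irrefl u h
    · exact hne rfl

/-- Iterated projected graphs: `G_0 = G`, `G_t = G_{t-1} | W_t`. -/
def projSeq (G : SimpleGraph V) (W : ℕ → Finset V) : ℕ → SimpleGraph V
  | 0 => G
  | t + 1 => cliqueProj (projSeq G W t) (W (t + 1))

/-- `F_t = {x ∈ STAB(G) : x_{W_j} = 1, j = 1, …, t}`. -/
def Fface [DecidableEq V] (G : SimpleGraph V) (W : ℕ → Finset V) (t : ℕ) : Set (V → ℝ) :=
  {x ∈ STAB G | ∀ j ∈ Finset.Icc 1 t, vsum (W j) x = 1}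

/-- `α(G[H], c)`: the maximum `c`-weight of a stable set of `G` contained in `H`. -/
noncomputable def alphaW (G : SimpleGraph V) (H : Finset V) (c : V → ℝ) : ℝ :=
  sSup {r : ℝ | ∃ S : Finset V, S ⊆ H ∧ IsStable G S ∧ r = ∑ v ∈ S, c v}

/-- `α(G[H])`: the maximum cardinality of a stable set of `G` contained in `H`. -/
noncomputable def alphaOn (G : SimpleGraph V) (H : Finset V) : ℕ :=
  sSup {k : ℕ | ∃ S : Finset V, S ⊆ H ∧ IsStable G S ∧ S.card = k}

/-- The stability number `α(G)`. -/
noncomputable def alphaNum [Fintype V] (G : SimpleGraph V) : ℕ :=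
  sSup {k : ℕ | ∃ S : Finset V, IsStable G S ∧ S.card = k}

/-- `cᵀx`. -/
def dotp [Fintype V] (c x : V → ℝ) : ℝ := ∑ v, c v * x v

/-- The affine dimension of a set of points. -/
noncomputable def affDim (s : Set (V → ℝ)) : ℕ := Module.finrank ℝ (vectorSpan ℝ s)

/-- Strong hypertree (with hyperedges of size `k`). -/
inductive IsStrongHypertree [DecidableEq V] (k : ℕ) : Finset V → Finset (Finset V) → Prop
  | base (V' : Finset V) : IsStrongHypertree k V' {V'}
  | step (V' : Finset V) (E : Finset (Finset V)) (v : V) (Wi : Finset V) :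
      v ∈ V' → v ∈ Wi → Wi ∈ E →
      (∃ Wj ∈ E, Wj ≠ Wi ∧ (Wi ∩ Wj).card = k - 1) →
      IsStrongHypertree k (V'.erase v) (E.erase Wi) →
      IsStrongHypertree k V' E

/-- Condition (I): `|W_t| = k` and the subgraph of `G_{t-1}` induced by `W_1 ∪ ⋯ ∪ W_t`
is `k`-partite with stable vertex classes `V_t^1, …, V_t^k`. -/
def CondI [DecidableEq V] (G : SimpleGraph V) (W : ℕ → Finset V)
    (Vc : ℕ → ℕ → Finset V) (k t : ℕ) : Prop :=
  (W t).card = k ∧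
  (Finset.Icc 1 k).biUnion (Vc t) = (Finset.Icc 1 t).biUnion W ∧
  (∀ i ∈ Finset.Icc 1 k, ∀ j ∈ Finset.Icc 1 k, i ≠ j → Disjoint (Vc t i) (Vc t j)) ∧
  (∀ i ∈ Finset.Icc 1 k, ∀ u ∈ Vc t i, ∀ v ∈ Vc t i, ¬(projSeq G W (t - 1)).Adj u v)

/-- Condition (II): `T_t = (V_t, {W_1, …, W_t})` is a strong hypertree. -/
def CondII [DecidableEq V] (W : ℕ → Finset V) (Vc : ℕ → ℕ → Finset V) (k t : ℕ) : Prop :=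
  IsStrongHypertree k ((Finset.Icc 1 k).biUnion (Vc t)) ((Finset.Icc 1 t).image W)

/-- Condition (III): every `w ∉ V_t` misses some class `V_t^i` in `G_{t-1}`. -/
def CondIII [DecidableEq V] (G : SimpleGraph V) (W : ℕ → Finset V)
    (Vc : ℕ → ℕ → Finset V) (k t : ℕ) : Prop :=
  ∀ w : V, w ∉ (Finset.Icc 1 k).biUnion (Vc t) →
    ∃ i ∈ Finset.Icc 1 k, ∀ u ∈ Vc t i, ¬(projSeq G W (t - 1)).Adj w u

/-- Condition (IV). -/
def CondIV [Fintype V] [DecidableEq V] (G : SimpleGraph V) (W : ℕ → Finset V)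
    (Vc : ℕ → ℕ → Finset V) (k r : ℕ) : Prop :=
  ∀ i ∈ Finset.Icc 1 (k - 1), ∀ t ∈ Finset.Icc 1 r, ∀ v ∈ W t ∩ Vc t i,
    ∀ w ∈ Finset.univ \ (Finset.Icc 1 k).biUnion (Vc r),
      (∃ z ∈ Vc r i, (projSeq G W r).Adj z w) →
      (G.Adj v w ∨ ∃ t' ∈ Finset.Icc 1 r,
        (projSeq G W (t' - 1)).IsClique (W t : Set V) ∧
        W t ≠ W t' ∧ (W t ∩ W t').card = k - 1 ∧
        v ∉ W t' ∧ ∃ v' ∈ W t' ∩ Vc r i, (projSeq G W (t' - 1)).Adj v' w)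

/-- Condition (V): no vertex of `V_t^k` has a neighbor in `V_r^0` in the graph `G_r`. -/
def CondV [Fintype V] [DecidableEq V] (G : SimpleGraph V) (W : ℕ → Finset V)
    (Vc : ℕ → ℕ → Finset V) (k r t : ℕ) : Prop :=
  ∀ v ∈ Vc t k, ∀ w ∈ Finset.univ \ (Finset.Icc 1 k).biUnion (Vc r),
    ¬(projSeq G W r).Adj v w

/-- `STAB(G[H])`, embedded in `ℝ^V` (coordinates outside `H` are zero). -/
def STABon [DecidableEq V] (G : SimpleGraph V) (H : Finset V) : Set (V → ℝ) :=
  convexHull ℝ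
    {x | ∃ S : Finset V, S ⊆ H ∧ IsStable G S ∧ x = fun v => if v ∈ S then (1 : ℝ) else 0}

/-! Let `S` be a maximum-weight stable set of `G` inside `H \ W`, where `H` is the support of `c`.
Its characteristic vector `χ` satisfies `χ_W = 0` and `cᵀχ = α(G[H \ W], c)`, so the lifted
equation `f(χ) = 0` holds; the `n - 1` given roots of `f` lie on the hyperplane `x_W = 1`, which
misses `χ`, so adding `χ` to them keeps the family affinely independent. -/

section AffineIndependent

variable {k E P : Type*} [Field k] [AddCommGroup E] [Module k E] [AddTorsor E P]

theorem AffineIndependent.snoc {n : ℕ} {p : Fin n → P} (hp : AffineIndependent k p) {x : P}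
    (hx : x ∉ affineSpan k (Set.range p)) :
    AffineIndependent k (Fin.snoc p x : Fin (n + 1) → P) := by
  refine AffineIndependent.affineIndependent_of_notMem_span (i := Fin.last n) ?_ ?_
  · rw [← affineIndependent_equiv (finSuccAboveEquiv (Fin.last n))]
    simpa [Function.comp_def, finSuccAboveEquiv_apply] using hp
  · rw [Fin.snoc_last]
    convert hx using 3
    ext y
    constructor
    · rintro ⟨i, hi, rfl⟩
      obtain ⟨j, rfl⟩ := Fin.exists_castSucc_eq.mpr hi
      exact ⟨j, by simp⟩
    · rintro ⟨j, rfl⟩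
      exact ⟨j.castSucc, (Fin.castSucc_lt_last j).ne, by simp⟩

theorem notMem_affineSpan_of_affineMap_ne (f : P →ᵃ[k] k) {s : Set P} {a : k}
    (hs : ∀ y ∈ s, f y = a) {x : P} (hx : f x ≠ a) : x ∉ affineSpan k s := by
  have hle : affineSpan k s ≤ (affineSpan k {a}).comap f :=
    affineSpan_le.mpr fun y hy => by simp [hs y hy]
  exact fun hmem => hx (by simpa [AffineSubspace.mem_affineSpan_singleton] using hle hmem)

end AffineIndependent

def vsumLinear (W : Finset V) : (V → ℝ) →ₗ[ℝ] ℝ := ∑ v ∈ W, LinearMap.proj v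

@[simp]
theorem vsumLinear_apply (W : Finset V) (x : V → ℝ) : vsumLinear W x = vsum W x := by
  simp [vsumLinear, vsum]

theorem exists_isStable_sum_eq_alphaW (G : SimpleGraph V) (H : Finset V) (c : V → ℝ) :
    ∃ S ⊆ H, IsStable G S ∧ alphaW G H c = ∑ v ∈ S, c v := by
  have hne : {r : ℝ | ∃ S ⊆ H, IsStable G S ∧ r = ∑ v ∈ S, c v}.Nonempty :=
    ⟨0, ∅, empty_subset H, by simp [IsStable]⟩
  have hfin : {r : ℝ | ∃ S ⊆ H, IsStable G S ∧ r = ∑ v ∈ S, c v}.Finite := by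
    refine ((H.powerset : Set (Finset V)).toFinite.image fun S => ∑ v ∈ S, c v).subset ?_
    rintro r ⟨S, hSH, -, rfl⟩
    exact ⟨S, mem_powerset.mpr hSH, rfl⟩
  exact hne.csSup_mem hfin

section Indicator

variable [DecidableEq V]

theorem indicator_mem_STAB {G : SimpleGraph V} {S : Finset V} (hS : IsStable G S) :
    (fun v => if v ∈ S then (1 : ℝ) else 0) ∈ STAB G :=
  subset_convexHull ℝ _ ⟨S, hS, rfl⟩

theorem vsum_indicator_of_disjoint {W S : Finset V} (h : Disjoint W S) :
    vsum W (fun v => if v ∈ S then (1 : ℝ) else 0) = 0 :=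
  sum_eq_zero fun _ hv => if_neg (disjoint_left.mp h hv)

theorem dotp_indicator [Fintype V] (c : V → ℝ) (S : Finset V) :
    dotp c (fun v => if v ∈ S then (1 : ℝ) else 0) = ∑ v ∈ S, c v := by
  simp [dotp]

end Indicator

theorem stmt3_general {V : Type*} [Fintype V] [DecidableEq V] (G : SimpleGraph V)
    (W : Finset V)
    (c : V → ℝ) (d : ℝ)
    (hfacet : ∃ p : Fin (Fintype.card V - 1) → V → ℝ,
      (∀ i, p i ∈ STAB G ∧ vsum W (p i) = 1 ∧ dotp c (p i) = d) ∧
      AffineIndependent ℝ p) :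
    ∃ p : Fin (Fintype.card V) → V → ℝ,
      (∀ i, p i ∈ STAB G ∧
        (dotp c (p i) - d) -
          (d - alphaW G ((Finset.univ.filter fun v => c v ≠ 0) \ W) c) *
            (vsum W (p i) - 1) = 0) ∧
      AffineIndependent ℝ p := by
  obtain ⟨p, hp, hpAI⟩ := hfacet
  set H := (Finset.univ.filter fun v => c v ≠ 0) \ W
  obtain ⟨S, hSH, hS, hαS⟩ := exists_isStable_sum_eq_alphaW G H c
  set χ : V → ℝ := fun v => if v ∈ S then 1 else 0
  have hχW : vsum W χ = 0 :=
    vsum_indicator_of_disjoint (sdiff_disjoint.mono_left hSH).symm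
  have hχ : χ ∉ affineSpan ℝ (Set.range p) :=
    notMem_affineSpan_of_affineMap_ne (vsumLinear W).toAffineMap (a := 1)
      (by rintro _ ⟨i, rfl⟩; simpa using (hp i).2.1) (by simp [hχW])
  let q : Fin (Fintype.card V - 1 + 1) → V → ℝ := Fin.snoc p χ
  have hq : ∀ j, q j ∈ STAB G ∧
      (dotp c (q j) - d) - (d - alphaW G H c) * (vsum W (q j) - 1) = 0 := by
    refine Fin.lastCases ?_ fun i => ?_
    · have hχc : dotp c χ = alphaW G H c := by rw [dotp_indicator, hαS]
      simp only [q, Fin.snoc_last, hχW, hχc]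
      exact ⟨indicator_mem_STAB hS, by ring⟩
    · simp only [q, Fin.snoc_castSucc, (hp i).2.1, (hp i).2.2]
      exact ⟨(hp i).1, by ring⟩
  -- `card V - 1 + 1` exceeds `card V` (by one) only when `V` is empty
  let e := Fin.castLEEmb (by omega : Fintype.card V ≤ Fintype.card V - 1 + 1)
  exact ⟨q ∘ e, fun i => hq (e i), (hpAI.snoc hχ).comp_embedding e⟩

/-- the lifting lemma (facet part). -/
theorem stmt3 {V : Type*} [Fintype V] [DecidableEq V] (G : SimpleGraph V)
    (W : Finset V) (hW : G.IsClique (W : Set V))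
    (hmax : ∀ u ∉ W, ¬ G.IsClique ((insert u W : Finset V) : Set V))
    (c : V → ℝ) (d : ℝ)
    (hvalid : ∀ x ∈ STAB G, vsum W x = 1 → dotp c x ≤ d)
    (hfacet : ∃ p : Fin (Fintype.card V - 1) → V → ℝ,
      (∀ i, p i ∈ STAB G ∧ vsum W (p i) = 1 ∧ dotp c (p i) = d) ∧
      AffineIndependent ℝ p) :
    ∃ p : Fin (Fintype.card V) → V → ℝ,
      (∀ i, p i ∈ STAB G ∧
        (dotp c (p i) - d) -
          (d - alphaW G ((Finset.univ.filter fun v => c v ≠ 0) \ W) c) *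
            (vsum W (p i) - 1) = 0) ∧
      AffineIndependent ℝ p :=
  stmt3_general G W c d hfacet
end

section
/- Let G_0 = G and let W_1, …, W_r be such that each W_t is a clique of G_{t−1} and G_t = G_{t−1}|W_t, and let W_{r+1} be a clique of G_r. Define recursively, for t = r down to 1, λ^B_t = max{ x_{W_{r+1}} + Σ_{i=t+1}^r λ^B_i (x_{W_i} − 1) : x ∈ STAB(G_{t−1}), x_{W_t} = 0 } − 1. Then the inequality x_{W_{r+1}} + Σ_{t=1}^r λ^B_t (x_{W_t} − 1) ≤ 1 is valid for STAB(G). -/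
open Finset

variable {V : Type*}

/-! Backward induction on `t`: the inequality truncated to the terms `i ≥ t` is valid for
`STAB(G_{t-1})`. For `t = r + 1` it is the clique inequality for `W_{r+1}` in `G_r`. In the step
it suffices, by convexity, to check stable sets `S` of `G_{t-1}`. If `S` meets the clique `W_t`,
then it does so in one vertex, which is adjacent in `G_{t-1}` to no vertex of `S`, so `S` stays
stable in `G_t` and the new term vanishes; if `S` misses `W_t`, the truncated form at `S` is at
most `λ_t + 1` by the definition of `λ_t` as a maximum, attained since `STAB` is compact. -/

lemma AffineMap.le_of_mem_convexHull {E : Type*} [AddCommGroup E] [Module ℝ E] {s : Set E}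
    (f : E →ᵃ[ℝ] ℝ) {c : ℝ} (h : ∀ x ∈ s, f x ≤ c) : ∀ x ∈ convexHull ℝ s, f x ≤ c :=
  fun _ hx => convexHull_min h ((convex_Iic c).affine_preimage f) hx

def vsumₗ (W : Finset V) : (V → ℝ) →ₗ[ℝ] ℝ := ∑ v ∈ W, LinearMap.proj v

@[simp]
lemma vsumₗ_apply (W : Finset V) (x : V → ℝ) : vsumₗ W x = vsum W x := by
  simp [vsumₗ, vsum]

lemma IsStable.cliqueProj {G : SimpleGraph V} {W S : Finset V} (hS : IsStable G S)
    {z : V} (hzS : z ∈ S) (hzW : z ∈ W) : IsStable (cliqueProj G W) S := by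
  rintro u hu v hv (h | ⟨-, -, h⟩)
  · exact hS u hu v hv h
  · rcases h z hzW with h | h
    · exact hS z hzS u hu h
    · exact hS z hzS v hv h

section StablePolytope

variable [DecidableEq V]

lemma vsum_indicator (W S : Finset V) :
    vsum W (fun v => if v ∈ S then (1 : ℝ) else 0) = #(W ∩ S) := by
  rw [vsum, Finset.sum_boole, Finset.filter_mem_eq_inter]

lemma IsStable.card_inter_le_one {G : SimpleGraph V} {W S : Finset V}
    (hS : IsStable G S) (hW : G.IsClique (W : Set V)) : #(W ∩ S) ≤ 1 := by
  refine Finset.card_le_one.2 fun a ha b hb => ?_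
  rw [Finset.mem_inter] at ha hb
  by_contra hne
  exact hS a ha.2 b hb.2 (hW ha.1 hb.1 hne)

lemma vsum_le_one_of_isClique {G : SimpleGraph V} {W : Finset V}
    (hW : G.IsClique (W : Set V)) : ∀ x ∈ STAB G, vsum W x ≤ 1 := by
  intro x hx
  refine (vsumₗ_apply W x).symm.trans_le <|
    AffineMap.le_of_mem_convexHull (vsumₗ W).toAffineMap ?_ x hx
  rintro _ ⟨S, hS, rfl⟩
  simpa [vsum_indicator] using hS.card_inter_le_one hW

theorem add_mul_vsum_sub_one_le_one_of_cliqueProj {G : SimpleGraph V} {W : Finset V}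
    (hW : G.IsClique (W : Set V))
    (f : (V → ℝ) →ᵃ[ℝ] ℝ) {lam : ℝ} (hproj : ∀ x ∈ STAB (cliqueProj G W), f x ≤ 1)
    (hlam : ∀ x ∈ STAB G, vsum W x = 0 → f x ≤ lam + 1) :
    ∀ x ∈ STAB G, f x + lam * (vsum W x - 1) ≤ 1 := by
  have key := AffineMap.le_of_mem_convexHull (s := stableVecs G) (c := 1)
    (f + lam • ((vsumₗ W).toAffineMap - AffineMap.const ℝ _ 1))
  simp only [AffineMap.coe_add, AffineMap.coe_smul, AffineMap.coe_sub, AffineMap.coe_const,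
    Pi.add_apply, Pi.smul_apply, Pi.sub_apply, LinearMap.coe_toAffineMap, vsumₗ_apply,
    Function.const_apply, smul_eq_mul] at key
  refine key ?_
  rintro _ ⟨S, hS, rfl⟩
  rcases (W ∩ S).eq_empty_or_nonempty with hWS | ⟨z, hz⟩
  · have h0 : vsum W (fun v => if v ∈ S then (1 : ℝ) else 0) = 0 := by
      simp [vsum_indicator, hWS]
    have := hlam _ (subset_convexHull ℝ _ ⟨S, hS, rfl⟩) h0
    rw [h0]
    linarith
  · rw [Finset.mem_inter] at hz
    have h1 : vsum W (fun v => if v ∈ S then (1 : ℝ) else 0) = 1 := by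
      rw [vsum_indicator, le_antisymm (hS.card_inter_le_one hW)
        (Finset.card_pos.2 ⟨z, Finset.mem_inter.2 hz⟩)]
      norm_num
    have := hproj _ (subset_convexHull ℝ _ ⟨S, hS.cliqueProj hz.2 hz.1, rfl⟩)
    rw [h1]
    linarith

variable [Fintype V]

lemma stableVecs_finite (G : SimpleGraph V) : (stableVecs G).Finite :=
  (Set.finite_range fun S : Finset V => fun v => if v ∈ S then (1 : ℝ) else 0).subset
    fun _ ⟨S, _, hx⟩ => ⟨S, hx.symm⟩

lemma isCompact_STAB (G : SimpleGraph V) : IsCompact (STAB G) :=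
  (stableVecs_finite G).isCompact_convexHull ℝ

lemma le_sSup_of_mem_STAB (G : SimpleGraph V) {p : (V → ℝ) → Prop} {g : (V → ℝ) → ℝ}
    (hg : Continuous g) {x : V → ℝ} (hx : x ∈ STAB G) (hpx : p x) :
    g x ≤ sSup {y | ∃ x ∈ STAB G, p x ∧ y = g x} := by
  refine le_csSup (((isCompact_STAB G).image hg).bddAbove.mono ?_) ⟨x, hx, hpx, rfl⟩
  rintro _ ⟨x, hx, -, rfl⟩
  exact ⟨x, hx, rfl⟩

end StablePolytope

section Lifting

variable (W₀ : Finset V) (W : ℕ → Finset V) (lam : ℕ → ℝ)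

def liftedForm (T : Finset ℕ) : (V → ℝ) →ᵃ[ℝ] ℝ :=
  (vsumₗ W₀ + ∑ i ∈ T, lam i • vsumₗ (W i)).toAffineMap -
    AffineMap.const ℝ (V → ℝ) (∑ i ∈ T, lam i)

lemma liftedForm_apply (T : Finset ℕ) (x : V → ℝ) :
    liftedForm W₀ W lam T x = vsum W₀ x + ∑ i ∈ T, lam i * (vsum (W i) x - 1) := by
  simp only [liftedForm, AffineMap.coe_sub, LinearMap.coe_toAffineMap, AffineMap.coe_const,
    Pi.sub_apply, LinearMap.add_apply, vsumₗ_apply, LinearMap.coe_sum, LinearMap.coe_smul,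
    Finset.sum_apply, Pi.smul_apply, smul_eq_mul, Function.const_apply, mul_sub, mul_one,
    Finset.sum_sub_distrib]
  ring

theorem liftedForm_le_one_of_projSeq [DecidableEq V] (G : SimpleGraph V) (r : ℕ)
    (hW₀ : (projSeq G W r).IsClique (W₀ : Set V))
    (hW : ∀ m < r, (projSeq G W m).IsClique (W (m + 1) : Set V))
    (hlam : ∀ m < r, ∀ x ∈ STAB (projSeq G W m), vsum (W (m + 1)) x = 0 →
      liftedForm W₀ W lam (Finset.Icc (m + 2) r) x ≤ lam (m + 1) + 1) :
    ∀ m ≤ r, ∀ x ∈ STAB (projSeq G W m), liftedForm W₀ W lam (Finset.Icc (m + 1) r) x ≤ 1 := by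
  intro m hm
  induction hm using Nat.decreasingInduction with
  | self =>
    simpa [liftedForm_apply] using vsum_le_one_of_isClique hW₀
  | of_succ m hm ih =>
    have hIcc : Finset.Icc (m + 1) r = insert (m + 1) (Finset.Icc (m + 2) r) :=
      (Finset.insert_Icc_add_one_left_eq_Icc hm).symm
    intro x hx
    have := add_mul_vsum_sub_one_le_one_of_cliqueProj (hW m hm) _ ih (hlam m hm) x hx
    rw [liftedForm_apply] at this
    rw [hIcc, liftedForm_apply, Finset.sum_insert (by simp)]
    linarith

end Lifting

/-- validity of the basic lifting procedure. -/
theorem stmt5 {V : Type*} [Fintype V] [DecidableEq V] (G : SimpleGraph V)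
    (r : ℕ) (W : ℕ → Finset V)
    (hclique : ∀ t ∈ Finset.Icc 1 (r + 1),
      (projSeq G W (t - 1)).IsClique (W t : Set V))
    (lamB : ℕ → ℝ)
    (hlam : ∀ t ∈ Finset.Icc 1 r, lamB t =
      sSup {y : ℝ | ∃ x ∈ STAB (projSeq G W (t - 1)), vsum (W t) x = 0 ∧
        y = vsum (W (r + 1)) x +
          ∑ i ∈ Finset.Icc (t + 1) r, lamB i * (vsum (W i) x - 1)} - 1) :
    ∀ x ∈ STAB G,
      vsum (W (r + 1)) x + ∑ t ∈ Finset.Icc 1 r, lamB t * (vsum (W t) x - 1) ≤ 1 := by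
  have hW : ∀ m ≤ r, (projSeq G W m).IsClique (W (m + 1) : Set V) := fun m hm => by
    simpa using hclique (m + 1) (Finset.mem_Icc.2 ⟨by omega, by omega⟩)
  have hlamB : ∀ m < r, ∀ x ∈ STAB (projSeq G W m), vsum (W (m + 1)) x = 0 →
      liftedForm (W (r + 1)) W lamB (Finset.Icc (m + 2) r) x ≤ lamB (m + 1) + 1 := by
    intro m hm x hx hx0
    have hcont : Continuous (liftedForm (W (r + 1)) W lamB (Finset.Icc (m + 2) r)) :=
      AffineMap.continuous_of_finiteDimensional _
    have := le_sSup_of_mem_STAB _ (p := fun x => vsum (W (m + 1)) x = 0) hcont hx hx0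
    simpa [liftedForm_apply, hlam (m + 1) (Finset.mem_Icc.2 ⟨by omega, hm⟩)] using this
  intro x hx
  simpa [liftedForm_apply] using liftedForm_le_one_of_projSeq (W (r + 1)) W lamB G r
    (hW r le_rfl) (fun m hm => hW m hm.le) hlamB 0 (Nat.zero_le r) x hx
end
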